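/- arXiv:1404.5780 — 8 statements merged into one kernel-verified Lean document; each statement's English description precedes it below -/
import Mathlib

section
/- Let D be a digraph of order n ≥ 3 containing a path P := x_1x_2…x_m with 2 ≤ m ≤ n−1, and let x be a vertex not on P. If one of the following holds: (i) d(x,P) ≥ m+2; (ii) d(x,P) ≥ m+1 and (xx_1 is not an arc of D or x_mx is not an arc of D); (iii) d(x,P) ≥ m, xx_1 is not an arc of D and x_mx is not an arc of D; then there exists i ∈ [1,m−1] such that x_ix and xx_{i+1} are both arcs of D (so D contains the path x_1x_2…x_ixx_{i+1}…x_m of length m). -/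
open Finset

variable {V : Type*}

/-- Out-degree of a vertex. -/
def outDeg [Fintype V] (A : V → V → Prop) [DecidableRel A] (v : V) : ℕ :=
  (Finset.univ.filter (fun u => A v u)).card

/-- In-degree of a vertex. -/
def inDeg [Fintype V] (A : V → V → Prop) [DecidableRel A] (v : V) : ℕ :=
  (Finset.univ.filter (fun u => A u v)).card

/-- Degree of a vertex: out-degree plus in-degree. -/
def deg [Fintype V] (A : V → V → Prop) [DecidableRel A] (v : V) : ℕ :=
  outDeg A v + inDeg A v

/-- Two vertices are adjacent if there is an arc between them in some direction. -/
def Adj (A : V → V → Prop) (u v : V) : Prop := A u v ∨ A v u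

/-- Condition (*): for every pair of non-adjacent vertices with a common in-neighbour,
`min {d(x), d(y)} ≥ n - 1` and `d(x) + d(y) ≥ 2n - 1`. -/
def CondStar [Fintype V] (A : V → V → Prop) [DecidableRel A] : Prop :=
  ∀ x y : V, x ≠ y → ¬ Adj A x y → (∃ z : V, A z x ∧ A z y) →
    min (deg A x) (deg A y) ≥ Fintype.card V - 1 ∧
    deg A x + deg A y ≥ 2 * Fintype.card V - 1

/-- A Hamiltonian bypass: an ordering `x₁, …, xₙ` of all vertices such that
`x₁x₂, …, x_{n-1}xₙ` and `x₁xₙ` are all arcs. -/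
def HamBypass (A : V → V → Prop) : Prop :=
  ∃ l : List V, l.Nodup ∧ (∀ v : V, v ∈ l) ∧ l.Chain' A ∧
    ∃ a b : V, l.head? = some a ∧ l.getLast? = some b ∧ A a b

theorem stmt1 [Fintype V] [DecidableEq V] (A : V → V → Prop) [DecidableRel A]
    (hloop : Irreflexive A)
    (n : ℕ) (hcard : Fintype.card V = n) (hn : 3 ≤ n)
    (m : ℕ) (hm2 : 2 ≤ m) (hmn : m ≤ n - 1)
    (x : Fin m → V) (hinj : Function.Injective x)
    (hpath : ∀ j k : Fin m, (j : ℕ) + 1 = (k : ℕ) → A (x j) (x k))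
    (v : V) (hv : ∀ j : Fin m, v ≠ x j)
    (hcases :
      (((Finset.univ.filter (fun j : Fin m => A v (x j))).card +
       (Finset.univ.filter (fun j : Fin m => A (x j) v)).card) ≥ m + 2) ∨
      (((Finset.univ.filter (fun j : Fin m => A v (x j))).card +
       (Finset.univ.filter (fun j : Fin m => A (x j) v)).card) ≥ m + 1 ∧
        (¬ A v (x ⟨0, by omega⟩) ∨ ¬ A (x ⟨m - 1, by omega⟩) v)) ∨
      (((Finset.univ.filter (fun j : Fin m => A v (x j))).card +
       (Finset.univ.filter (fun j : Fin m => A (x j) v)).card) ≥ m ∧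
        ¬ A v (x ⟨0, by omega⟩) ∧ ¬ A (x ⟨m - 1, by omega⟩) v)) :
    ∃ j k : Fin m, (j : ℕ) + 1 = (k : ℕ) ∧ A (x j) v ∧ A v (x k) := by
  by_contra hcon
  push_neg at hcon
  -- indicator functions on ℕ
  set a : ℕ → ℕ := fun i => if h : i < m then (if A v (x ⟨i, h⟩) then 1 else 0) else 0 with ha
  set b : ℕ → ℕ := fun i => if h : i < m then (if A (x ⟨i, h⟩) v then 1 else 0) else 0 with hb
  have hO : (Finset.univ.filter (fun j : Fin m => A v (x j))).card = ∑ i ∈ Finset.range m, a i := by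
    rw [← Fin.sum_univ_eq_sum_range]
    rw [Finset.card_filter]
    apply Finset.sum_congr rfl
    intro j _
    simp [ha, j.isLt]
  have hI : (Finset.univ.filter (fun j : Fin m => A (x j) v)).card = ∑ i ∈ Finset.range m, b i := by
    rw [← Fin.sum_univ_eq_sum_range]
    rw [Finset.card_filter]
    apply Finset.sum_congr rfl
    intro j _
    simp [hb, j.isLt]
  have key : ∀ i ∈ Finset.range (m - 1), b i + a (i + 1) ≤ 1 := by
    intro i hi
    simp only [Finset.mem_range] at hi
    have h1 : i < m := by omega
    have h2 : i + 1 < m := by omega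
    simp only [ha, hb, dif_pos h1, dif_pos h2]
    by_cases hb1 : A (x ⟨i, h1⟩) v
    · by_cases ha1 : A v (x ⟨i + 1, h2⟩)
      · exact absurd ha1 (hcon ⟨i, h1⟩ ⟨i + 1, h2⟩ rfl hb1)
      · simp [hb1, ha1]
    · simp only [hb1, if_false]; split <;> simp
  have hsum : ∑ i ∈ Finset.range (m - 1), (b i + a (i + 1)) ≤ m - 1 := by
    calc ∑ i ∈ Finset.range (m - 1), (b i + a (i + 1)) ≤ ∑ _i ∈ Finset.range (m - 1), 1 :=
      Finset.sum_le_sum key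
    _ = m - 1 := by simp
  have hm1 : m = (m - 1) + 1 := by omega
  have hAsum : ∑ i ∈ Finset.range m, a i = (∑ i ∈ Finset.range (m - 1), a (i + 1)) + a 0 := by
    rw [hm1, Finset.sum_range_succ']
    simp
  have hBsum : ∑ i ∈ Finset.range m, b i = (∑ i ∈ Finset.range (m - 1), b i) + b (m - 1) := by
    conv_lhs => rw [hm1, Finset.sum_range_succ]
  have hsplit : ∑ i ∈ Finset.range (m - 1), (b i + a (i + 1)) =
      (∑ i ∈ Finset.range (m - 1), b i) + ∑ i ∈ Finset.range (m - 1), a (i + 1) :=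
    Finset.sum_add_distrib
  have ha0 : a 0 ≤ 1 := by
    simp only [ha]
    split <;> [skip; simp] <;> split <;> simp
  have hbm : b (m - 1) ≤ 1 := by
    simp only [hb]
    split <;> [skip; simp] <;> split <;> simp
  have h0m : (0 : ℕ) < m := by omega
  have hmm : m - 1 < m := by omega
  rcases hcases with h | ⟨h, h'⟩ | ⟨h, h1, h2⟩
  · rw [hO, hI] at h; omega
  · have : a 0 = 0 ∨ b (m - 1) = 0 := by
      rcases h' with h' | h'
      · left; simp only [ha, dif_pos h0m]; simp [h']
      · right; simp only [hb, dif_pos hmm]; simp [h']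
    rw [hO, hI] at h; omega
  · have ha0' : a 0 = 0 := by simp only [ha, dif_pos h0m]; simp [h1]
    have hbm' : b (m - 1) = 0 := by simp only [hb, dif_pos hmm]; simp [h2]
    rw [hO, hI] at h; omega
end

section
/- Let D be a digraph of order n ≥ 3, let C := x_1x_2…x_{n-1}x_1 be a cycle of length n−1 in D (subscripts modulo n−1), and let y be the vertex not on C. If D contains no Hamiltonian bypass, then for every i ∈ [1,n−1], at most one of yx_i, yx_{i+1} is an arc of D, and at most one of x_iy, x_{i+1}y is an arc of D. -/
open Finset

variable {V : Type*}

/-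
Going once around the cycle starting at `x (i+1)` gives a Hamiltonian path of `D - y` from
`x (i+1)` to `x i`. If `y` dominates both ends, prepending `y` gives a bypass whose reversed arc is
`y → x i`; if both ends dominate `y`, appending `y` gives one whose reversed arc is `x (i+1) → y`.
-/

open Function

structure IsHamPathAvoiding (A : V → V → Prop) (y : V) (l : List V) : Prop where
  nodup : l.Nodup
  not_mem : y ∉ l
  mem_of_ne : ∀ v, v ≠ y → v ∈ l
  isChain : l.IsChain A

namespace IsHamPathAvoiding

variable {A : V → V → Prop} {y u w : V} {l : List V}

theorem hamBypass_cons (hl : IsHamPathAvoiding A y l) (hhead : l.head? = some u)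
    (hlast : l.getLast? = some w) (hyu : A y u) (hyw : A y w) : HamBypass A := by
  refine ⟨y :: l, List.nodup_cons.mpr ⟨hl.not_mem, hl.nodup⟩, fun v => ?_, ?_, y, w, rfl, ?_, hyw⟩
  · by_cases hv : v = y
    · exact hv ▸ List.mem_cons_self
    · exact List.mem_cons_of_mem _ (hl.mem_of_ne v hv)
  · exact List.isChain_cons.mpr ⟨fun b hb => by simp_all, hl.isChain⟩
  · simp [List.getLast?_cons, hlast]

theorem hamBypass_concat (hl : IsHamPathAvoiding A y l) (hhead : l.head? = some u)
    (hlast : l.getLast? = some w) (hwy : A w y) (huy : A u y) : HamBypass A := by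
  refine ⟨l ++ [y], ?_, fun v => ?_, ?_, u, y, by simp [hhead], List.getLast?_concat, huy⟩
  · exact List.nodup_append.mpr ⟨hl.nodup, List.nodup_singleton y,
      fun a ha b hb => by rintro rfl; exact hl.not_mem (List.mem_singleton.mp hb ▸ ha)⟩
  · by_cases hv : v = y
    · simp [hv]
    · exact List.mem_append_left _ (hl.mem_of_ne v hv)
  · exact List.isChain_append.mpr ⟨hl.isChain, List.isChain_singleton y,
      fun a ha b hb => by simp_all⟩

end IsHamPathAvoiding

theorem exists_apply_eq_of_ne {ι : Type*} [Fintype ι] [Fintype V] {x : ι → V} (hx : Injective x)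
    {y : V} (hy : ∀ i, y ≠ x i) (hcard : Fintype.card V = Fintype.card ι + 1) {v : V}
    (hv : v ≠ y) : ∃ i, x i = v := by
  classical
  have hcover : insert y (Finset.univ.image x) = Finset.univ := by
    refine Finset.eq_univ_of_card _ ?_
    rw [Finset.card_insert_of_notMem (by simpa [eq_comm] using hy),
      Finset.card_image_of_injective _ hx, Finset.card_univ, hcard]
  have hmem : v ∈ insert y (Finset.univ.image x) := hcover ▸ Finset.mem_univ v
  simpa [hv] using hmem

section Cycle

variable {m : ℕ}

def cycleList (x : ZMod m → V) (j : ZMod m) : List V :=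
  (List.range m).map fun k : ℕ => x (j + k)

variable (x : ZMod m → V) (j : ZMod m)

theorem mem_cycleList [NeZero m] {v : V} : v ∈ cycleList x j ↔ ∃ w, x w = v := by
  simp only [cycleList, List.mem_map, List.mem_range]
  refine ⟨fun ⟨k, _, hk⟩ => ⟨_, hk⟩, fun ⟨w, hw⟩ => ⟨(w - j).val, ZMod.val_lt _, ?_⟩⟩
  rw [ZMod.natCast_zmod_val, add_sub_cancel, hw]

theorem nodup_cycleList {x : ZMod m → V} (hx : Injective x) : (cycleList x j).Nodup := by
  refine List.Nodup.map_on (fun a ha b hb hab => ?_) List.nodup_range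
  rw [List.mem_range] at ha hb
  simpa [ZMod.val_cast_of_lt ha, ZMod.val_cast_of_lt hb] using
    congrArg ZMod.val (add_left_cancel (hx hab))

theorem isChain_cycleList {A : V → V → Prop} (hcyc : ∀ i, A (x i) (x (i + 1))) :
    (cycleList x j).IsChain A := by
  rw [cycleList, List.isChain_map, List.isChain_range]
  intro k _
  simpa [add_assoc] using hcyc (j + k)

theorem head?_cycleList [NeZero m] : (cycleList x j).head? = some (x j) := by
  obtain ⟨k, rfl⟩ := Nat.exists_eq_succ_of_ne_zero (NeZero.ne m)
  simp [cycleList, List.range_succ_eq_map]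

theorem getLast?_cycleList [NeZero m] : (cycleList x j).getLast? = some (x (j - 1)) := by
  obtain ⟨k, rfl⟩ := Nat.exists_eq_succ_of_ne_zero (NeZero.ne m)
  have hk : ((k : ℕ) : ZMod (k + 1)) = -1 := by
    rw [eq_neg_iff_add_eq_zero, ← Nat.cast_succ, ZMod.natCast_self]
  simp [cycleList, List.range_succ, hk, sub_eq_add_neg]

theorem isHamPathAvoiding_cycleList [Fintype V] [NeZero m] (hcard : Fintype.card V = m + 1)
    {A : V → V → Prop} {x : ZMod m → V} (hx : Injective x) (hcyc : ∀ i, A (x i) (x (i + 1)))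
    {y : V} (hy : ∀ i, y ≠ x i) (j : ZMod m) : IsHamPathAvoiding A y (cycleList x j) := by
  refine ⟨nodup_cycleList j hx, fun h => ?_, fun v hv => ?_, isChain_cycleList x j hcyc⟩
  · obtain ⟨w, hw⟩ := (mem_cycleList x j).mp h
    exact hy w hw.symm
  · exact (mem_cycleList x j).mpr <| exists_apply_eq_of_ne hx hy (by rwa [ZMod.card]) hv

end Cycle

theorem stmt2_general [Fintype V] (A : V → V → Prop)
    (n : ℕ) (hcard : Fintype.card V = n) (hn : 3 ≤ n)
    (x : ZMod (n - 1) → V) (hinj : Function.Injective x)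
    (hcyc : ∀ i : ZMod (n - 1), A (x i) (x (i + 1)))
    (y : V) (hy : ∀ i : ZMod (n - 1), y ≠ x i)
    (hnb : ¬ HamBypass A) :
    ∀ i : ZMod (n - 1),
      ¬ (A y (x i) ∧ A y (x (i + 1))) ∧ ¬ (A (x i) y ∧ A (x (i + 1)) y) := by
  intro i
  have : NeZero (n - 1) := ⟨by omega⟩
  have hpath := isHamPathAvoiding_cycleList (by omega) hinj hcyc hy (i + 1)
  have hhead := head?_cycleList x (i + 1)
  have hlast : (cycleList x (i + 1)).getLast? = some (x i) := by
    simpa using getLast?_cycleList x (i + 1)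
  exact ⟨fun ⟨hyi, hyi'⟩ => hnb (hpath.hamBypass_cons hhead hlast hyi' hyi),
    fun ⟨hiy, hiy'⟩ => hnb (hpath.hamBypass_concat hhead hlast hiy hiy')⟩

theorem stmt2 [Fintype V] [DecidableEq V] (A : V → V → Prop) [DecidableRel A]
    (hloop : Irreflexive A)
    (n : ℕ) (hcard : Fintype.card V = n) (hn : 3 ≤ n)
    (x : ZMod (n - 1) → V) (hinj : Function.Injective x)
    (hcyc : ∀ i : ZMod (n - 1), A (x i) (x (i + 1)))
    (y : V) (hy : ∀ i : ZMod (n - 1), y ≠ x i)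
    (hnb : ¬ HamBypass A) :
    ∀ i : ZMod (n - 1),
      ¬ (A y (x i) ∧ A y (x (i + 1))) ∧ ¬ (A (x i) y ∧ A (x (i + 1)) y) :=
  stmt2_general A n hcard hn x hinj hcyc y hy hnb
end

section
/- Let D be a digraph of order n ≥ 3, let C := x_1x_2…x_{n-1}x_1 be a cycle of length n−1 in D (subscripts modulo n−1), and let y be the vertex not on C. If D contains no Hamiltonian bypass, then d^+(y) ≤ (n−1)/2, d^-(y) ≤ (n−1)/2, and d(y) ≤ n−1. -/
/-!
If `y` had arcs to two consecutive cycle vertices `x i` and `x (i+1)`, then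
`y, x (i+1), x (i+2), …, x i` would be a Hamiltonian bypass. So the out-neighbours of `y`,
read as a subset of `ZMod (n-1)`, contain no two consecutive residues, and there are at most
`(n-1)/2` of them. Reversing every arc turns bypasses into bypasses and in-neighbours into
out-neighbours, which gives the bound on `d^-(y)`; the bound on `d(y)` is the sum.
-/

open Finset

variable {V : Type*}

open Function

theorem two_mul_card_le_card_of_injective {α : Type*} [Fintype α] {f : α → α} (hf : Injective f)
    {S : Finset α} (hS : ∀ i ∈ S, f i ∉ S) : 2 * #S ≤ Fintype.card α := by
  have hdisj : Disjoint S (S.map ⟨f, hf⟩) := by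
    rw [disjoint_left]
    rintro _ hi hi'
    obtain ⟨j, hj, rfl⟩ := mem_map.1 hi'
    exact hS j hj hi
  calc 2 * #S = #(S.disjUnion _ hdisj) := by rw [card_disjUnion, card_map]; ring
    _ ≤ Fintype.card α := card_le_univ _

theorem eq_or_mem_range_of_card_eq_succ {ι : Type*} [Fintype ι] [Fintype V] {x : ι → V}
    (hinj : Injective x) {y : V} (hy : ∀ i, y ≠ x i)
    (hcard : Fintype.card V = Fintype.card ι + 1) (v : V) : v = y ∨ v ∈ Set.range x := by
  classical
  have huniv : insert y (univ.image x) = univ := by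
    refine eq_univ_of_card _ ?_
    rw [card_insert_of_notMem (by simpa [eq_comm] using hy), card_image_of_injective _ hinj,
      card_univ, hcard]
  have hv : v ∈ insert y (univ.image x) := huniv ▸ mem_univ v
  simpa using hv

theorem HamBypass.of_flip {A : V → V → Prop} (h : HamBypass (flip A)) :
    HamBypass A := by
  obtain ⟨l, hnd, hall, hch, a, b, ha, hb, hab⟩ := h
  refine ⟨l.reverse, List.nodup_reverse.2 hnd, fun v => List.mem_reverse.2 (hall v),
    List.isChain_reverse.2 hch, b, a, ?_, ?_, hab⟩
  · rwa [List.head?_reverse]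
  · rwa [List.getLast?_reverse]

section CycleWalk

variable {m : ℕ}

def cycleWalk (x : ZMod m → V) (j : ZMod m) : List V :=
  (List.range m).map fun k : ℕ => x (j + (k : ZMod m))

variable {x : ZMod m → V}

theorem cycleWalk_nodup (hinj : Injective x) (j : ZMod m) : (cycleWalk x j).Nodup := by
  refine List.Nodup.map_on (fun k hk k' hk' hxx => ?_) List.nodup_range
  rw [List.mem_range] at hk hk'
  have h := congrArg ZMod.val (add_left_cancel (hinj hxx))
  rwa [ZMod.val_cast_of_lt hk, ZMod.val_cast_of_lt hk'] at h

theorem mem_cycleWalk_iff [NeZero m] {j : ZMod m} {v : V} :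
    v ∈ cycleWalk x j ↔ v ∈ Set.range x := by
  simp only [cycleWalk, List.mem_map, List.mem_range, Set.mem_range]
  refine ⟨fun ⟨k, _, hk⟩ => ⟨_, hk⟩, fun ⟨i, hi⟩ => ⟨(i - j).val, ZMod.val_lt _, ?_⟩⟩
  rw [ZMod.natCast_zmod_val, add_sub_cancel, hi]

theorem cycleWalk_isChain {A : V → V → Prop} (hcyc : ∀ i, A (x i) (x (i + 1))) (j : ZMod m) :
    (cycleWalk x j).IsChain A := by
  rw [cycleWalk, List.isChain_map]
  rcases m with _ | m
  · simp
  rw [List.isChain_range_succ]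
  intro k _
  push_cast
  rw [← add_assoc]
  exact hcyc _

theorem head?_cycleWalk [NeZero m] (j : ZMod m) : (cycleWalk x j).head? = some (x j) := by
  obtain ⟨m, rfl⟩ := Nat.exists_eq_succ_of_ne_zero (NeZero.ne m)
  simp [cycleWalk, List.range_succ_eq_map]

theorem getLast?_cycleWalk [NeZero m] (j : ZMod m) :
    (cycleWalk x j).getLast? = some (x (j - 1)) := by
  obtain ⟨m, rfl⟩ := Nat.exists_eq_succ_of_ne_zero (NeZero.ne m)
  have hm : ((m : ℕ) : ZMod (m + 1)) = -1 :=
    eq_neg_of_add_eq_zero_left (by exact_mod_cast ZMod.natCast_self (m + 1))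
  simp [cycleWalk, List.range_succ, hm, sub_eq_add_neg]

end CycleWalk

section ExtraVertex

variable {A : V → V → Prop} {m : ℕ} [NeZero m] {x : ZMod m → V} {y : V}

theorem hamBypass_of_arcs_to_consecutive (hinj : Injective x) (hcyc : ∀ i, A (x i) (x (i + 1)))
    (hy : ∀ i, y ≠ x i) (hcover : ∀ v, v = y ∨ v ∈ Set.range x) {i : ZMod m}
    (h : A y (x i)) (h' : A y (x (i + 1))) : HamBypass A := by
  refine ⟨y :: cycleWalk x (i + 1), ?_, fun v => ?_, ?_, y, x i, rfl, ?_, h⟩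
  · refine List.nodup_cons.2 ⟨fun hmem => ?_, cycleWalk_nodup hinj _⟩
    obtain ⟨k, hk⟩ := mem_cycleWalk_iff.1 hmem
    exact hy k hk.symm
  · rcases hcover v with rfl | hv
    · exact List.mem_cons_self
    · exact List.mem_cons_of_mem _ (mem_cycleWalk_iff.2 hv)
  · rw [List.Chain', List.isChain_cons, head?_cycleWalk]
    exact ⟨fun _ hb => Option.mem_some_iff.1 hb ▸ h', cycleWalk_isChain hcyc _⟩
  · simp [List.getLast?_cons, getLast?_cycleWalk]

theorem two_mul_outDeg_le_of_not_hamBypass [Fintype V] [DecidableRel A] (hloop : ¬ A y y)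
    (hinj : Injective x) (hcyc : ∀ i, A (x i) (x (i + 1))) (hy : ∀ i, y ≠ x i)
    (hcover : ∀ v, v = y ∨ v ∈ Set.range x) (hnb : ¬ HamBypass A) : 2 * outDeg A y ≤ m := by
  classical
  set S := univ.filter fun i => A y (x i)
  have hS : ∀ i ∈ S, i + 1 ∉ S := fun i hi hi' =>
    hnb <| hamBypass_of_arcs_to_consecutive hinj hcyc hy hcover
      (mem_filter.1 hi).2 (mem_filter.1 hi').2
  have hout : outDeg A y ≤ #S :=
    calc outDeg A y ≤ #(S.image x) := by
          refine card_le_card fun v hv => ?_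
          have hyv := (mem_filter.1 hv).2
          rcases hcover v with rfl | ⟨i, rfl⟩
          · exact absurd hyv hloop
          · exact mem_image_of_mem x (mem_filter.2 ⟨mem_univ _, hyv⟩)
      _ ≤ #S := card_image_le
  have hS2 := two_mul_card_le_card_of_injective (add_left_injective 1) hS
  rw [ZMod.card] at hS2
  omega

theorem two_mul_inDeg_le_of_not_hamBypass [Fintype V] [DecidableRel A] (hloop : ¬ A y y)
    (hinj : Injective x) (hcyc : ∀ i, A (x i) (x (i + 1))) (hy : ∀ i, y ≠ x i)
    (hcover : ∀ v, v = y ∨ v ∈ Set.range x) (hnb : ¬ HamBypass A) : 2 * inDeg A y ≤ m := by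
  let _ : DecidableRel (flip A) := fun u v => ‹DecidableRel A› v u
  have hcyc' : ∀ i, flip A (x (-i)) (x (-(i + 1))) := fun i => by
    have h := hcyc (-i - 1)
    rwa [sub_add_cancel, ← neg_add'] at h
  have hcover' : ∀ v, v = y ∨ v ∈ Set.range (x ∘ Neg.neg) := by
    rwa [neg_surjective.range_comp]
  exact two_mul_outDeg_le_of_not_hamBypass (A := flip A) hloop (hinj.comp neg_injective) hcyc'
    (fun i => hy (-i)) hcover' (mt HamBypass.of_flip hnb)

end ExtraVertex

theorem stmt3_general [Fintype V] (A : V → V → Prop) [DecidableRel A]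
    (hloop : Irreflexive A)
    (n : ℕ) (hcard : Fintype.card V = n) (hn : 3 ≤ n)
    (x : ZMod (n - 1) → V) (hinj : Function.Injective x)
    (hcyc : ∀ i : ZMod (n - 1), A (x i) (x (i + 1)))
    (y : V) (hy : ∀ i : ZMod (n - 1), y ≠ x i)
    (hnb : ¬ HamBypass A) :
    outDeg A y ≤ (n - 1) / 2 ∧ inDeg A y ≤ (n - 1) / 2 ∧ deg A y ≤ n - 1 := by
  have : NeZero (n - 1) := ⟨by omega⟩
  have hcover : ∀ v, v = y ∨ v ∈ Set.range x :=
    eq_or_mem_range_of_card_eq_succ hinj hy (by rw [hcard, ZMod.card]; omega)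
  have hout := two_mul_outDeg_le_of_not_hamBypass (hloop y) hinj hcyc hy hcover hnb
  have hin := two_mul_inDeg_le_of_not_hamBypass (hloop y) hinj hcyc hy hcover hnb
  unfold deg
  omega

theorem stmt3 [Fintype V] [DecidableEq V] (A : V → V → Prop) [DecidableRel A]
    (hloop : Irreflexive A)
    (n : ℕ) (hcard : Fintype.card V = n) (hn : 3 ≤ n)
    (x : ZMod (n - 1) → V) (hinj : Function.Injective x)
    (hcyc : ∀ i : ZMod (n - 1), A (x i) (x (i + 1)))
    (y : V) (hy : ∀ i : ZMod (n - 1), y ≠ x i)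
    (hnb : ¬ HamBypass A) :
    outDeg A y ≤ (n - 1) / 2 ∧ inDeg A y ≤ (n - 1) / 2 ∧ deg A y ≤ n - 1 :=
  stmt3_general A hloop n hcard hn x hinj hcyc y hy hnb
end

section
/- Let D be a digraph of order n ≥ 3, let C := x_1x_2…x_{n-1}x_1 be a cycle of length n−1 in D (subscripts modulo n−1), and let y be the vertex not on C. If D contains no Hamiltonian bypass and x_ky and yx_{k+1} are arcs of D for some k, then for every vertex x_i on C with x_i ≠ x_k, the arc x_{i+1}x_i is not in D. -/
open Finset

variable {V : Type*}

/-! The bypass is `x (i+1), x (i+2), …, x k, y, x (k+1), …, x i`: go once around the cycle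
starting at `x (i+1)`, detouring through `y` between `x k` and `x (k+1)`; the reversed arc
`x (i+1) → x i` joins its ends. -/

theorem List.IsChain.append_cons_of_rel {α : Type*} {R : α → α → Prop} {l₁ l₂ : List α}
    {u y w : α} (h : (l₁ ++ l₂).IsChain R) (hu : l₁.getLast? = some u) (hw : l₂.head? = some w)
    (huy : R u y) (hyw : R y w) : (l₁ ++ y :: l₂).IsChain R := by
  rw [List.isChain_append] at h ⊢
  obtain ⟨h₁, h₂, -⟩ := h
  refine ⟨h₁, ?_, by simpa [hu] using huy⟩
  cases l₂ with
  | nil => simp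
  | cons w' l₂ => simp_all

theorem hamBypass_of_nodup_of_length [Fintype V] {A : V → V → Prop} {l : List V}
    (hnd : l.Nodup) (hlen : l.length = Fintype.card V) (hch : l.IsChain A) {a b : V}
    (ha : l.head? = some a) (hb : l.getLast? = some b) (hab : A a b) : HamBypass A := by
  classical
  have huniv : l.toFinset = Finset.univ :=
    Finset.eq_univ_of_card _ (by rw [List.toFinset_card_of_nodup hnd, hlen])
  exact ⟨l, hnd, fun v => List.mem_toFinset.1 (huniv ▸ Finset.mem_univ v), hch, a, b, ha, hb, hab⟩

def cyclePath {m : ℕ} (x : ZMod m → V) (a : ZMod m) (j : ℕ) : List V :=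
  (List.range j).map fun t : ℕ => x (a + t)

section cyclePath

variable {m : ℕ} (x : ZMod m → V)

theorem cyclePath_add (a : ZMod m) (j l : ℕ) :
    cyclePath x a (j + l) = cyclePath x a j ++ cyclePath x (a + j) l := by
  simp [cyclePath, List.range_add, add_assoc]

theorem length_cyclePath (a : ZMod m) (j : ℕ) : (cyclePath x a j).length = j := by
  simp [cyclePath]

theorem head?_cyclePath (a : ZMod m) {j : ℕ} (hj : 0 < j) :
    (cyclePath x a j).head? = some (x a) := by
  obtain ⟨j, rfl⟩ := Nat.exists_eq_add_of_lt hj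
  simp [cyclePath, List.range_succ_eq_map]

theorem getLast?_cyclePath (a : ZMod m) (j : ℕ) :
    (cyclePath x a (j + 1)).getLast? = some (x (a + j)) := by
  simp [cyclePath, List.range_succ]

theorem isChain_cyclePath {A : V → V → Prop} (hcyc : ∀ i, A (x i) (x (i + 1))) (a : ZMod m)
    (j : ℕ) : (cyclePath x a j).IsChain A := by
  cases j with
  | zero => simp [cyclePath]
  | succ j =>
    rw [cyclePath, List.isChain_map, List.isChain_range_succ]
    intro t _
    simpa [add_assoc] using hcyc (a + t)

theorem nodup_cyclePath (hx : Function.Injective x) (a : ZMod m) {j : ℕ} (hj : j ≤ m) :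
    (cyclePath x a j).Nodup := by
  refine List.Nodup.map_on (fun s hs t ht hst => ?_) List.nodup_range
  rw [List.mem_range] at hs ht
  rw [← ZMod.val_cast_of_lt (hs.trans_le hj), ← ZMod.val_cast_of_lt (ht.trans_le hj),
    add_left_cancel (hx hst)]

end cyclePath

theorem hamBypass_of_insert_of_reverse_arc [Fintype V] {A : V → V → Prop} {m : ℕ} [NeZero m]
    (hcard : Fintype.card V = m + 1) {x : ZMod m → V} (hinj : Function.Injective x)
    (hcyc : ∀ i, A (x i) (x (i + 1))) {y : V} (hy : ∀ i, y ≠ x i) {k i : ZMod m}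
    (hk1 : A (x k) y) (hk2 : A y (x (k + 1))) (hik : i ≠ k) (hrev : A (x (i + 1)) (x i)) :
    HamBypass A := by
  -- the arc `x (i+1), …, x k` of the cycle has `d + 1` vertices, `x (k+1), …, x i` has `e + 1`
  obtain ⟨d, hdm, hd⟩ : ∃ d : ℕ, d < m ∧ (d : ZMod m) = k - i - 1 :=
    ⟨_, ZMod.val_lt _, ZMod.natCast_zmod_val _⟩
  have hd_succ_ne : d + 1 ≠ m := fun h => hik <| by
    have : ((d + 1 : ℕ) : ZMod m) = 0 := by rw [h, ZMod.natCast_self]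
    push_cast at this
    linear_combination hd - this
  obtain ⟨e, hm⟩ : ∃ e, d + 1 + (e + 1) = m := ⟨m - d - 2, by omega⟩
  have hk : i + 1 + (d : ZMod m) = k := by linear_combination hd
  have hi : k + 1 + (e : ZMod m) = i := by
    have : ((d + 1 + (e + 1) : ℕ) : ZMod m) = 0 := by rw [hm, ZMod.natCast_self]
    push_cast at this
    linear_combination this - hd
  have hsplit :
      cyclePath x (i + 1) m = cyclePath x (i + 1) (d + 1) ++ cyclePath x (k + 1) (e + 1) := by
    have := cyclePath_add x (i + 1) (d + 1) (e + 1)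
    rw [hm] at this
    rw [this, ← hk]
    push_cast
    ring_nf
  have hy' : y ∉ cyclePath x (i + 1) m := by
    simp only [cyclePath, List.mem_map, not_exists, not_and]
    exact fun t _ h => hy _ h.symm
  refine hamBypass_of_nodup_of_length
    (l := cyclePath x (i + 1) (d + 1) ++ y :: cyclePath x (k + 1) (e + 1)) ?_ ?_ ?_
    (a := x (i + 1)) (b := x i) ?_ ?_ hrev
  · rw [List.perm_middle.nodup_iff, List.nodup_cons, ← hsplit]
    exact ⟨hy', nodup_cyclePath x hinj _ le_rfl⟩
  · simp only [List.length_append, List.length_cons, length_cyclePath]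
    omega
  · refine (hsplit ▸ isChain_cyclePath x hcyc (i + 1) m).append_cons_of_rel
      (getLast?_cyclePath x _ _) (head?_cyclePath x _ e.succ_pos) ?_ hk2
    rwa [hk]
  · simp [List.head?_append, head?_cyclePath]
  · simp [List.getLast?_append, List.getLast?_cons, getLast?_cyclePath, hi]

theorem stmt4_general [Fintype V] (A : V → V → Prop)
    (n : ℕ) (hcard : Fintype.card V = n) (hn : 3 ≤ n)
    (x : ZMod (n - 1) → V) (hinj : Function.Injective x)
    (hcyc : ∀ i : ZMod (n - 1), A (x i) (x (i + 1)))
    (y : V) (hy : ∀ i : ZMod (n - 1), y ≠ x i)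
    (hnb : ¬ HamBypass A)
    (k : ZMod (n - 1)) (hk1 : A (x k) y) (hk2 : A y (x (k + 1))) :
    ∀ i : ZMod (n - 1), x i ≠ x k → ¬ A (x (i + 1)) (x i) := by
  intro i hik hrev
  have : NeZero (n - 1) := ⟨by omega⟩
  exact hnb <| hamBypass_of_insert_of_reverse_arc (by omega) hinj hcyc hy hk1 hk2
    (mt (congrArg x) hik) hrev

theorem stmt4 [Fintype V] [DecidableEq V] (A : V → V → Prop) [DecidableRel A]
    (hloop : Irreflexive A)
    (n : ℕ) (hcard : Fintype.card V = n) (hn : 3 ≤ n)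
    (x : ZMod (n - 1) → V) (hinj : Function.Injective x)
    (hcyc : ∀ i : ZMod (n - 1), A (x i) (x (i + 1)))
    (y : V) (hy : ∀ i : ZMod (n - 1), y ≠ x i)
    (hnb : ¬ HamBypass A)
    (k : ZMod (n - 1)) (hk1 : A (x k) y) (hk2 : A y (x (k + 1))) :
    ∀ i : ZMod (n - 1), x i ≠ x k → ¬ A (x (i + 1)) (x i) :=
  stmt4_general A n hcard hn x hinj hcyc y hy hnb k hk1 hk2
end

section
/- Let D be a digraph of order n ≥ 6 with minimum out-degree and minimum in-degree both at least two, satisfying condition (*). Let C := x_1x_2…x_{n-1}x_1 be a cycle of length n−1 in D (subscripts modulo n−1), and let y be the vertex not on C. For any i ∈ [1,n−1]: if yx_i is not an arc of D and x_{i-2}x_i is not an arc of D, then either x_i has a partner on the subpath C[x_{i+1},x_{i-2}], or d(x_i) ≥ n−1. -/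
open Finset

variable {V : Type*}

theorem stmt5 [Fintype V] [DecidableEq V] (A : V → V → Prop) [DecidableRel A]
    (hloop : Irreflexive A)
    (n : ℕ) (hcard : Fintype.card V = n) (hn : 6 ≤ n)
    (hout : ∀ v : V, 2 ≤ outDeg A v) (hin : ∀ v : V, 2 ≤ inDeg A v)
    (hstar : CondStar A)
    (x : ZMod (n - 1) → V) (hinj : Function.Injective x)
    (hcyc : ∀ i : ZMod (n - 1), A (x i) (x (i + 1)))
    (y : V) (hy : ∀ i : ZMod (n - 1), y ≠ x i)
    (i : ZMod (n - 1)) (h1 : ¬ A y (x i)) (h2 : ¬ A (x (i - 2)) (x i)) :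
    (∃ k : ℕ, 1 ≤ k ∧ k ≤ n - 4 ∧
      A (x (i + (k : ZMod (n - 1)))) (x i) ∧ A (x i) (x (i + (k : ZMod (n - 1)) + 1))) ∨
    deg A (x i) ≥ n - 1 := by
  haveI : NeZero (n - 1) := ⟨by omega⟩
  have hcast0 : ∀ a : ℕ, a < n - 1 → a ≠ 0 → ((a : ℕ) : ZMod (n - 1)) ≠ 0 := by
    intro a ha ha0 h
    have := (ZMod.natCast_eq_zero_iff a (n - 1)).mp h
    have := Nat.le_of_dvd (by omega) this
    omega
  have hcastadd : ∀ a b : ℕ, a + b = n - 1 → ((a : ℕ) : ZMod (n - 1)) = -(b : ℕ) := by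
    intro a b hab
    have : ((a : ℕ) : ZMod (n - 1)) + (b : ℕ) = 0 := by
      rw [← Nat.cast_add, hab, ZMod.natCast_self]
    linear_combination this
  -- applying condition (*)
  have star_app : ∀ k : ℕ, 1 ≤ k → k + 1 ≤ n - 3 →
      A (x (i + (k : ZMod (n - 1)))) (x i) →
      ¬ A (x i) (x (i + (k : ZMod (n - 1)) + 1)) →
      ¬ A (x (i + (k : ZMod (n - 1)) + 1)) (x i) →
      deg A (x i) ≥ n - 1 := by
    intro k hk1 hk2 hkin hno1 hno2
    have hne : x i ≠ x (i + (k : ZMod (n - 1)) + 1) := by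
      intro h
      have h' := hinj h
      have : ((k + 1 : ℕ) : ZMod (n - 1)) = 0 := by
        push_cast
        linear_combination -h'
      exact hcast0 (k + 1) (by omega) (by omega) this
    have hmin := (hstar (x i) (x (i + (k : ZMod (n - 1)) + 1)) hne
      (by rintro (h | h) <;> [exact hno1 h; exact hno2 h])
      ⟨x (i + (k : ZMod (n - 1))), hkin, hcyc _⟩).1
    rw [hcard] at hmin
    exact le_trans hmin (min_le_left _ _)
  -- main induction: walking forward along the path
  have key : ∀ m k : ℕ, 1 ≤ k → k + m = n - 4 → A (x (i + (k : ZMod (n - 1)))) (x i) →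
      ((∃ k : ℕ, 1 ≤ k ∧ k ≤ n - 4 ∧
        A (x (i + (k : ZMod (n - 1)))) (x i) ∧ A (x i) (x (i + (k : ZMod (n - 1)) + 1))) ∨
      deg A (x i) ≥ n - 1) := by
    intro m
    induction m with
    | zero =>
      intro k hk1 hk2 hkin
      have hk4 : k = n - 4 := by omega
      by_cases hpar : A (x i) (x (i + (k : ZMod (n - 1)) + 1))
      · exact Or.inl ⟨k, hk1, by omega, hkin, hpar⟩
      · have heq : i + (k : ZMod (n - 1)) + 1 = i - 2 := by
          have h3 : ((n - 3 : ℕ) : ZMod (n - 1)) = -((2 : ℕ) : ZMod (n - 1)) :=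
            hcastadd (n - 3) 2 (by omega)
          have h4 : ((k : ℕ) : ZMod (n - 1)) + 1 = ((n - 3 : ℕ) : ZMod (n - 1)) := by
            have hnk : n - 3 = k + 1 := by omega
            rw [hnk]
            push_cast
            ring
          rw [add_assoc, h4, h3]
          push_cast
          ring
        have hno2 : ¬ A (x (i + (k : ZMod (n - 1)) + 1)) (x i) := by
          rw [heq]; exact h2
        exact Or.inr (star_app k hk1 (by omega) hkin hpar hno2)
    | succ m ih =>
      intro k hk1 hk2 hkin
      by_cases hpar : A (x i) (x (i + (k : ZMod (n - 1)) + 1))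
      · exact Or.inl ⟨k, hk1, by omega, hkin, hpar⟩
      · by_cases hback : A (x (i + (k : ZMod (n - 1)) + 1)) (x i)
        · have hc : ((k + 1 : ℕ) : ZMod (n - 1)) = (k : ZMod (n - 1)) + 1 := by push_cast; ring
          refine ih (k + 1) (by omega) (by omega) ?_
          rw [hc, ← add_assoc]
          exact hback
        · exact Or.inr (star_app k hk1 (by omega) hkin hpar hback)
  -- every vertex is y or on the cycle
  have hall : ∀ v : V, v ≠ y → ∃ j, v = x j := by
    intro v hv
    by_contra hno
    push_neg at hno
    have himg : (Finset.univ.image x).card = n - 1 := by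
      rw [Finset.card_image_of_injective _ hinj, Finset.card_univ, ZMod.card]
    have hyni : y ∉ Finset.univ.image x := by
      simp only [Finset.mem_image, Finset.mem_univ, true_and]
      rintro ⟨j, hj⟩
      exact hy j hj.symm
    have huniv : insert y (Finset.univ.image x) = Finset.univ := by
      apply Finset.eq_univ_of_card
      rw [Finset.card_insert_of_notMem hyni, himg, hcard]
      omega
    have hv' : v ∈ insert y (Finset.univ.image x) := huniv ▸ Finset.mem_univ v
    rcases Finset.mem_insert.mp hv' with h | h
    · exact hv h
    · obtain ⟨j, _, hj⟩ := Finset.mem_image.mp h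
      exact hno j hj.symm
  -- find an in-neighbour of x i at position i + k, 1 ≤ k ≤ n - 4
  by_cases hex : ∃ k : ℕ, 1 ≤ k ∧ k ≤ n - 4 ∧ A (x (i + (k : ZMod (n - 1)))) (x i)
  · obtain ⟨k, hk1, hk2, hk3⟩ := hex
    exact key (n - 4 - k) k hk1 (by omega) hk3
  · exfalso
    push_neg at hex
    have hsub : Finset.univ.filter (fun u => A u (x i)) ⊆ {x (i - 1)} := by
      intro u hu
      rw [Finset.mem_filter] at hu
      rw [Finset.mem_singleton]
      have hua : A u (x i) := hu.2
      have huy : u ≠ y := fun h => h1 (h ▸ hua)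
      obtain ⟨j, rfl⟩ := hall u huy
      by_contra hne
      have hji : j ≠ i := fun h => hloop (x i) (h ▸ hua)
      have hji2 : j ≠ i - 2 := fun h => h2 (h ▸ hua)
      have hji1 : j ≠ i - 1 := fun h => hne (congrArg x h)
      set k := (j - i).val with hkdef
      have hkc : ((k : ℕ) : ZMod (n - 1)) = j - i := ZMod.natCast_rightInverse _
      have hklt : k < n - 1 := ZMod.val_lt _
      have hk0 : k ≠ 0 := by
        intro h
        apply hji
        have : ((0 : ℕ) : ZMod (n - 1)) = j - i := h ▸ hkc
        have : j - i = 0 := by simpa using this.symm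
        linear_combination this
      have hkn2 : k ≠ n - 2 := by
        intro h
        apply hji1
        have h' : ((n - 2 : ℕ) : ZMod (n - 1)) = j - i := h ▸ hkc
        have h'' := hcastadd (n - 2) 1 (by omega)
        rw [h''] at h'
        push_cast at h'
        linear_combination -h'
      have hkn3 : k ≠ n - 3 := by
        intro h
        apply hji2
        have h' : ((n - 3 : ℕ) : ZMod (n - 1)) = j - i := h ▸ hkc
        have h'' := hcastadd (n - 3) 2 (by omega)
        rw [h''] at h'
        push_cast at h'
        linear_combination -h'
      refine hex k (by omega) (by omega) ?_
      rw [hkc]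
      have : i + (j - i) = j := by ring
      rw [this]
      exact hua
    have hle : inDeg A (x i) ≤ 1 := by
      have := Finset.card_le_card hsub
      simpa [inDeg] using this
    have := hin (x i)
    omega
end

section
/- Let D be a digraph of order n ≥ 6 with minimum out-degree and minimum in-degree both at least two, satisfying condition (*). Let C := x_1x_2…x_{n-1}x_1 be a cycle of length n−1 in D (subscripts modulo n−1), and let y be the vertex not on C. For any i ∈ [1,n−1]: if yx_i is not an arc of D and d(x_i) ≤ n−2, then either x_i has a partner on the subpath C[x_{i+1},x_{i-2}], or there is a vertex x_k on C[x_{i+1},x_{i-2}] such that every vertex of {x_k, x_{k+1}, …, x_{i-2}} has an arc to x_i. -/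
open Finset

variable {V : Type*}

theorem stmt6 [Fintype V] [DecidableEq V] (A : V → V → Prop) [DecidableRel A]
    (hloop : Irreflexive A)
    (n : ℕ) (hcard : Fintype.card V = n) (hn : 6 ≤ n)
    (hout : ∀ v : V, 2 ≤ outDeg A v) (hin : ∀ v : V, 2 ≤ inDeg A v)
    (hstar : CondStar A)
    (x : ZMod (n - 1) → V) (hinj : Function.Injective x)
    (hcyc : ∀ i : ZMod (n - 1), A (x i) (x (i + 1)))
    (y : V) (hy : ∀ i : ZMod (n - 1), y ≠ x i)
    (i : ZMod (n - 1)) (h1 : ¬ A y (x i)) (h2 : deg A (x i) ≤ n - 2) :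
    (∃ k : ℕ, 1 ≤ k ∧ k ≤ n - 4 ∧
      A (x (i + (k : ZMod (n - 1)))) (x i) ∧ A (x i) (x (i + (k : ZMod (n - 1)) + 1))) ∨
    (∃ k : ℕ, 1 ≤ k ∧ k ≤ n - 3 ∧
      ∀ m : ℕ, k ≤ m → m ≤ n - 3 → A (x (i + (m : ZMod (n - 1)))) (x i)) := by
  haveI : NeZero (n - 1) := ⟨by omega⟩
  by_cases hopt1 : (∃ k : ℕ, 1 ≤ k ∧ k ≤ n - 4 ∧
      A (x (i + (k : ZMod (n - 1)))) (x i) ∧ A (x i) (x (i + (k : ZMod (n - 1)) + 1)))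
  · exact Or.inl hopt1
  right
  have hne0 : ∀ m : ℕ, 1 ≤ m → m ≤ n - 2 → (m : ZMod (n-1)) ≠ 0 := by
    intro m h1m h2m h
    have hv : ((m : ZMod (n-1))).val = m := ZMod.val_cast_of_lt (by omega)
    rw [h] at hv
    simp at hv
    omega
  have step : ∀ m : ℕ, 1 ≤ m → m + 1 ≤ n - 3 →
      A (x (i + (m : ZMod (n-1)))) (x i) → A (x (i + ((m+1 : ℕ) : ZMod (n-1)))) (x i) := by
    intro m h1m h2m harc
    have hne : x i ≠ x (i + ((m+1 : ℕ) : ZMod (n-1))) := by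
      intro h
      have h' := hinj h
      have h0 : ((m+1 : ℕ) : ZMod (n-1)) = 0 := by
        have := left_eq_add.mp h'
        exact this
      exact hne0 (m+1) (by omega) (by omega) h0
    have harc2 : A (x (i + (m : ZMod (n-1)))) (x (i + ((m+1 : ℕ) : ZMod (n-1)))) := by
      have h := hcyc (i + (m : ZMod (n-1)))
      have : i + ((m+1 : ℕ) : ZMod (n-1)) = i + (m : ZMod (n-1)) + 1 := by
        push_cast; ring
      rw [this]
      exact h
    by_cases hadj : Adj A (x i) (x (i + ((m+1 : ℕ) : ZMod (n-1))))
    · rcases hadj with h | h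
      · exfalso
        apply hopt1
        refine ⟨m, h1m, by omega, harc, ?_⟩
        have heq : i + (m : ZMod (n-1)) + 1 = i + ((m+1 : ℕ) : ZMod (n-1)) := by
          push_cast; ring
        rw [heq]
        exact h
      · exact h
    · exfalso
      have hst := hstar (x i) (x (i + ((m+1 : ℕ) : ZMod (n-1)))) hne hadj
        ⟨x (i + (m : ZMod (n-1))), harc, harc2⟩
      rw [hcard] at hst
      have := hst.1
      have hmin : n - 1 ≤ deg A (x i) := (le_min_iff.mp this).1
      omega
  -- base: find an in-neighbour of x i not equal to x (i-1)
  obtain ⟨v, hvarc, hvne⟩ : ∃ v, A v (x i) ∧ v ≠ x (i - 1) := by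
    by_contra hcon
    push_neg at hcon
    have hsub : univ.filter (fun v => A v (x i)) ⊆ {x (i-1)} := by
      intro v hv
      simp only [mem_filter, mem_univ, true_and] at hv
      simp [hcon v hv]
    have hc := Finset.card_le_card hsub
    simp at hc
    have hd := hin (x i)
    unfold inDeg at hd
    omega
  have hvy : v ≠ y := fun h => h1 (h ▸ hvarc)
  have hcover : ∃ j, x j = v := by
    by_contra hcon
    push_neg at hcon
    have himg : (univ.image x).card = n - 1 := by
      rw [Finset.card_image_of_injective _ hinj, Finset.card_univ, ZMod.card]
    have hyni : y ∉ univ.image x := by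
      simp only [mem_image, mem_univ, true_and]
      rintro ⟨j, hj⟩
      exact hy j hj.symm
    have hvni : v ∉ insert y (univ.image x) := by
      simp only [mem_insert, mem_image, mem_univ, true_and]
      rintro (h | ⟨j, hj⟩)
      · exact hvy h
      · exact hcon j hj
    have h3 : (insert v (insert y (univ.image x))).card ≤ n := by
      have := Finset.card_le_univ (insert v (insert y (univ.image x)))
      rwa [hcard] at this
    rw [Finset.card_insert_of_notMem hvni, Finset.card_insert_of_notMem hyni, himg] at h3
    omega
  obtain ⟨j, hj⟩ := hcover
  have hji : j ≠ i := by
    intro h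
    exact hloop (x i) (by rw [← hj, h] at hvarc; exact hvarc)
  have hji1 : j ≠ i - 1 := fun h => hvne (by rw [← hj, h])
  set m₀ := (j - i).val with hm₀
  have hm₀lt : m₀ < n - 1 := ZMod.val_lt _
  have hm₀cast : ((m₀ : ℕ) : ZMod (n-1)) = j - i := by
    rw [hm₀]
    exact ZMod.natCast_rightInverse _
  have hm₀ne : m₀ ≠ 0 := by
    intro h
    have : j - i = 0 := by rw [← hm₀cast, h]; simp
    exact hji (by linear_combination this)
  have hm₀ne2 : m₀ ≠ n - 2 := by
    intro h
    have hneg : ((n - 2 : ℕ) : ZMod (n-1)) = -1 := by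
      have : ((n - 2 : ℕ) : ZMod (n-1)) + 1 = 0 := by
        have h1 : ((n - 2 : ℕ) : ZMod (n-1)) + 1 = ((n - 1 : ℕ) : ZMod (n-1)) := by
          have : n - 2 + 1 = n - 1 := by omega
          rw [← this]; push_cast; ring
        rw [h1, ZMod.natCast_self]
      linear_combination this
    have : j - i = -1 := by rw [← hm₀cast, h, hneg]
    exact hji1 (by linear_combination this)
  have harc0 : A (x (i + (m₀ : ZMod (n-1)))) (x i) := by
    rw [hm₀cast]
    have : i + (j - i) = j := by ring
    rw [this, hj]
    exact hvarc
  refine ⟨m₀, by omega, by omega, ?_⟩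
  intro m hm
  induction m, hm using Nat.le_induction with
  | base => intro _; exact harc0
  | succ m hm ih =>
    intro hle
    exact step m (by omega) (by omega) (ih (by omega))
end

section
/- Let D be a digraph of order n ≥ 6 with minimum out-degree and minimum in-degree both at least two, satisfying condition (*). Let C := x_1x_2…x_{n-1}x_1 be a cycle of length n−1 in D (subscripts modulo n−1), and let y be the vertex not on C. For any i ∈ [1,n−1]: if yx_i is an arc of D, x_{i-2}x_i is not an arc of D, and d^-(x_i) ≥ 3, then either x_i has a partner on the subpath C[x_{i+1},x_{i-1}], or d(x_i) ≥ n−1. -/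
open Finset

variable {V : Type*}

theorem stmt7 [Fintype V] [DecidableEq V] (A : V → V → Prop) [DecidableRel A]
    (hloop : Irreflexive A)
    (n : ℕ) (hcard : Fintype.card V = n) (hn : 6 ≤ n)
    (hout : ∀ v : V, 2 ≤ outDeg A v) (hin : ∀ v : V, 2 ≤ inDeg A v)
    (hstar : CondStar A)
    (x : ZMod (n - 1) → V) (hinj : Function.Injective x)
    (hcyc : ∀ i : ZMod (n - 1), A (x i) (x (i + 1)))
    (y : V) (hy : ∀ i : ZMod (n - 1), y ≠ x i)
    (i : ZMod (n - 1)) (h1 : A y (x i)) (h2 : ¬ A (x (i - 2)) (x i))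
    (h3 : 3 ≤ inDeg A (x i)) :
    (∃ k : ℕ, 1 ≤ k ∧ k ≤ n - 3 ∧
      A (x (i + (k : ZMod (n - 1)))) (x i) ∧ A (x i) (x (i + (k : ZMod (n - 1)) + 1))) ∨
    deg A (x i) ≥ n - 1 := by
  haveI : NeZero (n - 1) := ⟨by omega⟩
  -- cast facts
  have cast3 : ((n - 3 : ℕ) : ZMod (n-1)) = -2 := by
    have e : (n - 3) + 2 = n - 1 := by omega
    have h : ((n - 3 : ℕ) : ZMod (n-1)) + 2 = 0 := by
      rw [show ((2:ZMod (n-1)) = ((2:ℕ):ZMod (n-1))) by push_cast; ring,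
        ← Nat.cast_add, e, ZMod.natCast_self]
    linear_combination h
  have cast2 : ((n - 2 : ℕ) : ZMod (n-1)) = -1 := by
    have e : (n - 2) + 1 = n - 1 := by omega
    have h : ((n - 2 : ℕ) : ZMod (n-1)) + 1 = 0 := by
      rw [show ((1:ZMod (n-1)) = ((1:ℕ):ZMod (n-1))) by push_cast; ring,
        ← Nat.cast_add, e, ZMod.natCast_self]
    linear_combination h
  -- every vertex is y or on the cycle
  have hall : ∀ v : V, v = y ∨ ∃ j, v = x j := by
    have hynot : y ∉ Finset.univ.image x := by
      simp only [Finset.mem_image, Finset.mem_univ, true_and, not_exists]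
      exact fun j h => hy j h.symm
    have hcov : (insert y (Finset.univ.image x)) = Finset.univ := by
      apply Finset.eq_univ_of_card
      rw [Finset.card_insert_of_notMem hynot,
        Finset.card_image_of_injective _ hinj, Finset.card_univ, ZMod.card, hcard]
      omega
    intro v
    have := Finset.mem_univ v
    rw [← hcov] at this
    rcases Finset.mem_insert.mp this with h | h
    · exact Or.inl h
    · obtain ⟨j, _, rfl⟩ := Finset.mem_image.mp h
      exact Or.inr ⟨j, rfl⟩
  -- the set of "middle" in-neighbour indices
  set S : Finset ℕ := (Finset.Icc 1 (n-4)).filter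
      (fun k => A (x (i + (k : ZMod (n-1)))) (x i)) with hS
  have hSne : S.Nonempty := by
    by_contra hne
    rw [Finset.not_nonempty_iff_eq_empty] at hne
    have hsub : Finset.univ.filter (fun u => A u (x i)) ⊆ {y, x (i - 1)} := by
      intro u hu
      rw [Finset.mem_filter] at hu
      obtain ⟨-, hA⟩ := hu
      rcases hall u with rfl | ⟨j, rfl⟩
      · simp
      · have hjval : ((ZMod.val (j - i) : ℕ) : ZMod (n-1)) = j - i := by
          simp [ZMod.natCast_val, ZMod.cast_id]
        set k := ZMod.val (j - i) with hk
        have hj : j = i + (k : ZMod (n-1)) := by rw [hjval]; ring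
        have hklt : k < n - 1 := ZMod.val_lt _
        rcases Nat.lt_or_ge k 1 with hk0 | hk1
        · -- k = 0, loop
          interval_cases k
          · exfalso
            simp only [Nat.cast_zero, add_zero] at hj
            exact hloop _ (hj ▸ hA)
        · rcases Nat.lt_or_ge k (n - 3) with hkm | hkm
          · -- k ∈ [1, n-4] : contradiction with S empty
            exfalso
            have : k ∈ S := by
              rw [hS, Finset.mem_filter, Finset.mem_Icc]
              exact ⟨⟨hk1, by omega⟩, by rw [← hj]; exact hA⟩
            rw [hne] at this
            exact absurd this (Finset.notMem_empty k)
          · rcases Nat.lt_or_ge k (n - 2) with hkm2 | hkm2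
            · -- k = n - 3 : x (i-2), excluded
              exfalso
              have : k = n - 3 := by omega
              rw [this, cast3] at hj
              apply h2
              rw [show i - 2 = i + -2 by ring, ← hj]
              exact hA
            · -- k = n - 2 : x (i-1)
              have : k = n - 2 := by omega
              rw [this, cast2] at hj
              simp only [Finset.mem_insert, Finset.mem_singleton]
              right
              rw [hj]; congr 1; ring
    have hle : (Finset.univ.filter (fun u => A u (x i))).card ≤ 2 :=
      le_trans (Finset.card_le_card hsub) (Finset.card_insert_le _ _ |>.trans (by simp))
    have : 3 ≤ (Finset.univ.filter (fun u => A u (x i))).card := h3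
    omega
  -- take the maximal element of S
  set k := S.max' hSne with hkdef
  have hkmem : k ∈ S := S.max'_mem hSne
  rw [hS, Finset.mem_filter, Finset.mem_Icc] at hkmem
  obtain ⟨⟨hk1, hk4⟩, hkA⟩ := hkmem
  by_cases hfwd : A (x i) (x (i + (k : ZMod (n-1)) + 1))
  · exact Or.inl ⟨k, hk1, by omega, hkA, hfwd⟩
  · -- show no backward arc either, then apply (*)
    have hcast1 : ((k + 1 : ℕ) : ZMod (n-1)) = (k : ZMod (n-1)) + 1 := by push_cast; ring
    have hback : ¬ A (x (i + (k : ZMod (n-1)) + 1)) (x i) := by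
      intro hA
      rcases Nat.lt_or_ge (k + 1) (n - 3) with hlt | hge
      · have : (k+1) ∈ S := by
          rw [hS, Finset.mem_filter, Finset.mem_Icc]
          refine ⟨⟨by omega, by omega⟩, ?_⟩
          rw [hcast1, ← add_assoc]
          exact hA
        have := S.le_max' _ this
        rw [← hkdef] at this
        omega
      · have hkeq : k + 1 = n - 3 := by omega
        apply h2
        have : (k : ZMod (n-1)) + 1 = -2 := by
          rw [← hcast1, hkeq, cast3]
        rw [show i - 2 = i + -2 by ring, ← this, ← add_assoc]
        exact hA
    have hne2 : x i ≠ x (i + (k : ZMod (n-1)) + 1) := by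
      intro h
      have := hinj h
      have h0 : ((k + 1 : ℕ) : ZMod (n-1)) = 0 := by
        rw [hcast1]
        linear_combination - this
      have := (ZMod.natCast_eq_zero_iff (k+1) (n-1)).mp h0
      have := Nat.le_of_dvd (by omega) this
      omega
    have hnadj : ¬ Adj A (x i) (x (i + (k : ZMod (n-1)) + 1)) := by
      rintro (h | h)
      · exact hfwd h
      · exact hback h
    have hcom : ∃ z : V, A z (x i) ∧ A z (x (i + (k : ZMod (n-1)) + 1)) :=
      ⟨x (i + (k : ZMod (n-1))), hkA, hcyc _⟩
    obtain ⟨hmin, -⟩ := hstar _ _ hne2 hnadj hcom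
    right
    rw [hcard] at hmin
    exact le_trans hmin (min_le_left _ _)
end

section
/- For odd n ≥ 5, let D(n) be the digraph on vertex set {x_1,x_2,…,x_n} whose arc set consists exactly of the arcs of the Hamiltonian cycle x_1x_2…x_nx_1 together with the arcs x_1x_3, x_3x_5, …, x_{n-2}x_n; for even n ≥ 6, let D(n) be the digraph whose arc set consists exactly of the arcs of the Hamiltonian cycle x_1x_2…x_nx_1 together with the arcs x_1x_3, x_3x_5, …, x_{n-3}x_{n-1} and x_{n-1}x_1. In each case D(n) contains no Hamiltonian bypass. -/
open Finset

variable {V : Type*}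

set_option maxHeartbeats 1600000

lemma modsplit (x n : ℕ) (_h0 : 0 < n) (h : x < 2*n) :
    (x < n ∧ x % n = x) ∨ (n ≤ x ∧ x % n = x - n) := by
  rcases lt_or_ge x n with h'|h'
  · exact Or.inl ⟨h', Nat.mod_eq_of_lt h'⟩
  · exact Or.inr ⟨h', by rw [Nat.mod_eq_sub_mod h', Nat.mod_eq_of_lt (by omega)]⟩

lemma step_val (n x c : ℕ) (hn : 5 ≤ n) (hx : x < n) (hc : c = 1 ∨ c = 2) :
    ((x + c) % n + n - x) % n = c := by
  rcases modsplit (x+c) n (by omega) (by omega) with ⟨h', he⟩ | ⟨h', he⟩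
  · rw [he, show x + c + n - x = n + c by omega]
    rcases modsplit (n+c) n (by omega) (by omega) with ⟨h2,e2⟩|⟨h2,e2⟩ <;> omega
  · rw [he, show x + c - n + n - x = c by omega, Nat.mod_eq_of_lt (by omega)]

lemma core (n : ℕ) (hn : 5 ≤ n) (A : Fin n → Fin n → Prop)
    (h1 : ∀ u v : Fin n, A u v → (v:ℕ) = ((u:ℕ)+1) % n ∨ (v:ℕ) = ((u:ℕ)+2) % n)
    (h2 : ∀ u v : Fin n, A u v → (v:ℕ) = ((u:ℕ)+2) % n → (u:ℕ) % 2 = 0 ∧ (u:ℕ) ≠ n-1) :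
    ¬ HamBypass A := by
  rintro ⟨l, hnd, hmem, hch, a, b, ha, hb, hab⟩
  have hlen : l.length = n := by
    have h1' := List.toFinset_card_of_nodup hnd
    have h2' : l.toFinset = Finset.univ :=
      Finset.eq_univ_iff_forall.2 (fun v => List.mem_toFinset.2 (hmem v))
    rw [h2'] at h1'
    simpa using h1'.symm
  have npos : 0 < l.length := by omega
  set g : ℕ → ℕ := fun i => if h : i < l.length then ((l.get ⟨i, h⟩ : Fin n) : ℕ) else 0
    with hg
  have hgval : ∀ (i : ℕ) (h : i < l.length), g i = ((l.get ⟨i, h⟩ : Fin n) : ℕ) := by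
    intro i h; simp [hg, h]
  have hglt : ∀ i, i < n → g i < n := by
    intro i h
    rw [hgval i (by omega)]
    exact (l.get _).isLt
  have hginj : ∀ i j, i < n → j < n → g i = g j → i = j := by
    intro i j hi hj hgij
    rw [hgval i (by omega), hgval j (by omega)] at hgij
    have h3 := (List.Nodup.get_inj_iff hnd).1 (Fin.val_injective hgij)
    simpa using congrArg Fin.val h3
  have harc : ∀ i (h : i + 1 < n), A (l.get ⟨i, by omega⟩) (l.get ⟨i+1, by omega⟩) := by
    intro i h
    exact List.isChain_iff_getElem.1 hch i (by omega)
  set d : ℕ → ℕ := fun i => (g (i+1) + n - g i) % n with hdd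
  have hd : ∀ i, i + 1 < n → (d i = 1 ∨ d i = 2) ∧ g (i+1) = (g i + d i) % n := by
    intro i h
    have ha1 := h1 _ _ (harc i h)
    rw [← hgval i (by omega), ← hgval (i+1) (by omega)] at ha1
    have hgi := hglt i (by omega)
    rcases ha1 with hc | hc
    · have hv := step_val n (g i) 1 hn hgi (Or.inl rfl)
      have hdv : d i = 1 := by rw [hdd]; simp only; rw [hc]; exact hv
      exact ⟨Or.inl hdv, by rw [hdv]; exact hc⟩
    · have hv := step_val n (g i) 2 hn hgi (Or.inr rfl)
      have hdv : d i = 2 := by rw [hdd]; simp only; rw [hc]; exact hv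
      exact ⟨Or.inr hdv, by rw [hdv]; exact hc⟩
  set S : ℕ → ℕ := fun i => ∑ j ∈ Finset.range i, d j with hSdef
  have hS0 : S 0 = 0 := by simp [hSdef]
  have hSsucc : ∀ i, S (i+1) = S i + d i := by
    intro i; simp [hSdef, Finset.sum_range_succ]
  have hS : ∀ i, i < n → g i = (g 0 + S i) % n := by
    intro i hi
    induction i with
    | zero => rw [hS0]; simpa using (Nat.mod_eq_of_lt (hglt 0 (by omega))).symm
    | succ i ih =>
      have hdi := hd i hi
      rw [hSsucc, hdi.2, ih (by omega), Nat.mod_add_mod, Nat.add_assoc]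
  have hSb : ∀ i, i < n → i ≤ S i ∧ S i ≤ 2 * i := by
    intro i hi
    induction i with
    | zero => simp [hS0]
    | succ i ih =>
      have h3 := hd i hi
      have h4 := ih (by omega)
      have h5 := hSsucc i
      omega
  have hmodne : ∀ i j, i < n → j < n → i ≠ j → S i % n ≠ S j % n := by
    intro i j hi hj hij hmod
    apply hij
    apply hginj i j hi hj
    rw [hS i hi, hS j hj, Nat.add_mod (g 0) (S i), hmod, ← Nat.add_mod]
  -- the bypass arc
  have ha' : a = l.get ⟨0, npos⟩ := by
    rw [List.head?_eq_getElem?, List.getElem?_eq_getElem npos] at ha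
    simpa using ha.symm
  have hb' : b = l.get ⟨n-1, by omega⟩ := by
    rw [List.getLast?_eq_getElem?] at hb
    rw [List.getElem?_eq_getElem (by omega)] at hb
    have : l.length - 1 = n - 1 := by omega
    simp only [this] at hb
    simpa using hb.symm
  have hcval : ∃ c, (c = 1 ∨ c = 2) ∧ g (n-1) = (g 0 + c) % n := by
    have := h1 a b hab
    rw [ha', hb', ← hgval 0 npos, ← hgval (n-1) (by omega)] at this
    rcases this with h | h
    · exact ⟨1, Or.inl rfl, h⟩
    · exact ⟨2, Or.inr rfl, h⟩
  obtain ⟨c, hc12, hcv⟩ := hcval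
  have hb1 := hSb (n-1) (by omega)
  have hme : Nat.ModEq n (g 0 + S (n-1)) (g 0 + c) := by
    show _ % n = _ % n
    rw [← hS (n-1) (by omega), hcv]
  have hdvd : n ∣ (S (n-1) - c) :=
    (Nat.modEq_iff_dvd' (by omega)).1 ((Nat.ModEq.add_left_cancel' _ hme).symm)
  have hSn : S (n-1) = n + c := by
    obtain ⟨k, hk⟩ := hdvd
    rcases k with _ | _ | k
    · simp at hk; omega
    · simp at hk; omega
    · have h6 : n * (k+1+1) = n*k + 2*n := by ring
      omega
  have e1 : n - 1 = (n-2) + 1 := by omega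
  have hd2 := hd (n-2) (by omega)
  have hs2 : S (n-1) = S (n-2) + d (n-2) := by rw [e1, hSsucc]
  have hd0 := hd 0 (by omega)
  have hs1 : S 1 = d 0 := by rw [show (1:ℕ) = 0 + 1 from rfl, hSsucc, hS0, Nat.zero_add]
  rcases hc12 with rfl | rfl
  · -- c = 1 : first and last steps must be 2-steps, parity contradiction
    have hd0v : d 0 = 2 := by
      rcases hd0.1 with h' | h'
      · exfalso
        apply hmodne 1 (n-1) (by omega) (by omega) (by omega)
        rw [hs1, h', hSn, Nat.add_mod_left, Nat.mod_eq_of_lt (by omega)]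
      · exact h'
    have hd2v : d (n-2) = 2 := by
      rcases hd2.1 with h' | h'
      · exfalso
        apply hmodne 0 (n-2) (by omega) (by omega) (by omega)
        have : S (n-2) = n := by omega
        rw [hS0, this, Nat.zero_mod, Nat.mod_self]
      · exact h'
    have h20 : g 0 % 2 = 0 ∧ g 0 ≠ n - 1 := by
      have harc0 := harc 0 (by omega)
      have hprem : ((l.get ⟨0+1, by omega⟩ : Fin n) : ℕ)
          = (((l.get ⟨0, by omega⟩ : Fin n) : ℕ) + 2) % n := by
        rw [← hgval 0 (by omega), ← hgval (0+1) (by omega)]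
        have h7 := hd0.2
        rw [hd0v] at h7
        exact h7
      have h8 := h2 _ _ harc0 hprem
      rw [← hgval 0 (by omega)] at h8
      exact h8
    have h22 : g (n-2) % 2 = 0 ∧ g (n-2) ≠ n - 1 := by
      have harc2 := harc (n-2) (by omega)
      have hprem : ((l.get ⟨(n-2)+1, by omega⟩ : Fin n) : ℕ)
          = (((l.get ⟨n-2, by omega⟩ : Fin n) : ℕ) + 2) % n := by
        rw [← hgval (n-2) (by omega), ← hgval ((n-2)+1) (by omega)]
        have h7 := hd2.2
        rw [hd2v] at h7
        exact h7
      have h8 := h2 _ _ harc2 hprem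
      rw [← hgval (n-2) (by omega)] at h8
      exact h8
    have hS2v : S (n-2) = n - 1 := by omega
    have hg2v : g (n-2) = (g 0 + (n-1)) % n := by
      rw [hS (n-2) (by omega), hS2v]
    have hg0 := hglt 0 (by omega)
    rcases modsplit (g 0 + (n-1)) n (by omega) (by omega) with ⟨h', he⟩ | ⟨h', he⟩
    · -- g 0 = 0, g (n-2) = n-1 contradicts h22.2
      exact h22.2 (by omega)
    · -- g (n-2) = g 0 - 1 : parity contradiction
      have := h20.1
      have := h22.1
      omega
  · -- c = 2 : S (n-1) = n + 2
    rcases hd2.1 with h' | h'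
    · -- S (n-2) = n+1
      rcases hd0.1 with h0 | h0
      · -- S 1 = 1, conflicts with S (n-2) = n+1
        apply hmodne 1 (n-2) (by omega) (by omega) (by omega)
        rw [hs1, h0, show S (n-2) = n + 1 by omega, Nat.add_mod_left,
          Nat.mod_eq_of_lt (by omega)]
      · -- S 1 = 2, conflicts with S (n-1) = n+2
        apply hmodne 1 (n-1) (by omega) (by omega) (by omega)
        rw [hs1, h0, hSn, Nat.add_mod_left, Nat.mod_eq_of_lt (by omega)]
    · -- S (n-2) = n, conflicts with S 0 = 0
      apply hmodne 0 (n-2) (by omega) (by omega) (by omega)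
      rw [hS0, show S (n-2) = n by omega, Nat.zero_mod, Nat.mod_self]

theorem stmt19 (n : ℕ) (hn : 5 ≤ n) :
    (Odd n → ¬ HamBypass (fun u v : Fin n =>
      ((v : ℕ) = ((u : ℕ) + 1) % n) ∨
      (Even (u : ℕ) ∧ (u : ℕ) + 2 ≤ n - 1 ∧ (v : ℕ) = (u : ℕ) + 2))) ∧
    (Even n → ¬ HamBypass (fun u v : Fin n =>
      ((v : ℕ) = ((u : ℕ) + 1) % n) ∨
      (Even (u : ℕ) ∧ (u : ℕ) + 2 ≤ n - 2 ∧ (v : ℕ) = (u : ℕ) + 2) ∨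
      ((u : ℕ) = n - 2 ∧ (v : ℕ) = 0))) := by

  constructor
  · intro _
    apply core n hn
    · rintro u v (h | ⟨-, hle, hv⟩)
      · exact Or.inl h
      · right
        rw [hv, Nat.mod_eq_of_lt (by omega)]
    · rintro u v (h | ⟨he, hle, hveq⟩) hv2
      · exfalso
        rw [h] at hv2
        have hu := u.isLt
        rcases modsplit ((u:ℕ)+1) n (by omega) (by omega) with ⟨a1,e1⟩|⟨a1,e1⟩ <;>
          rcases modsplit ((u:ℕ)+2) n (by omega) (by omega) with ⟨a2,e2⟩|⟨a2,e2⟩ <;> omega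
      · have h9 : (u:ℕ) % 2 = 0 := Nat.even_iff.1 he
        exact ⟨h9, by omega⟩
  · intro heven
    have hev : n % 2 = 0 := Nat.even_iff.1 heven
    apply core n hn
    · rintro u v (h | ⟨-, hle, hv⟩ | ⟨hu, hv0⟩)
      · exact Or.inl h
      · right
        rw [hv, Nat.mod_eq_of_lt (by omega)]
      · right
        rw [hv0, hu, show n - 2 + 2 = n by omega, Nat.mod_self]
    · rintro u v (h | ⟨he, hle, hveq⟩ | ⟨hu, hv0⟩) hv2
      · exfalso
        rw [h] at hv2
        have hu := u.isLt
        rcases modsplit ((u:ℕ)+1) n (by omega) (by omega) with ⟨a1,e1⟩|⟨a1,e1⟩ <;>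
          rcases modsplit ((u:ℕ)+2) n (by omega) (by omega) with ⟨a2,e2⟩|⟨a2,e2⟩ <;> omega
      · have h9 : (u:ℕ) % 2 = 0 := Nat.even_iff.1 he
        exact ⟨h9, by omega⟩
      · exact ⟨by omega, by omega⟩
end
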